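/- arXiv:2304.12868 — 3 statements merged into one kernel-verified Lean document; each statement's English description precedes it below -/
import Mathlib

section
/- Let N be a positive integer and A a nonempty finite subset of ℤ_N. Define the Fourier bias ‖A‖_U = sup over nonzero ξ ∈ ℤ_N of |(1/N) · Σ_{a ∈ A} exp(-2πi·a·ξ/N)|, and the additive energy E(A,A) = #{(a,b,a',b') ∈ A×A×A×A : a + b = a' + b' in ℤ_N}. Then ‖A‖_U^4 ≤ E(A,A)/N³ − (|A|/N)⁴. -/
/-- Fourier bias of a finite subset `A` of `ℤ_N`:
`‖A‖_U = sup_{ξ ≠ 0} |(1/N) ∑_{a ∈ A} exp(-2πi a ξ / N)|`. -/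
noncomputable def fourierBias (N : ℕ) (A : Finset (ZMod N)) : ℝ :=
  ⨆ ξ : {ξ : ZMod N // ξ ≠ 0},
    ‖(N : ℂ)⁻¹ * ∑ a ∈ A,
      Complex.exp (-(2 * (Real.pi : ℂ) * Complex.I * ((a.val * ξ.1.val : ℕ) : ℂ) / (N : ℂ)))‖

/-- Additive energy `E(A,A) = #{(a,b,a',b') ∈ A⁴ : a + b = a' + b'}`. -/
def addEnergy (N : ℕ) (A : Finset (ZMod N)) : ℕ :=
  ((A ×ˢ A ×ˢ A ×ˢ A).filter
    (fun x => x.1 + x.2.1 = x.2.2.1 + x.2.2.2)).card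

/-!
Writing `Â(ξ) = ∑_{a ∈ A} ψ(aξ)` for the standard character `ψ` of `ℤ_N`, expanding `|Â(ξ)|⁴`
and summing over all `ξ` with the orthogonality relations gives `∑_ξ |Â(ξ)|⁴ = N · E(A,A)`.
The term `ξ = 0` alone contributes `|A|⁴`, so any single `ξ ≠ 0` satisfies
`|Â(ξ)|⁴ ≤ N · E(A,A) - |A|⁴`; dividing by `N⁴` bounds every term of the supremum.
-/

open Finset ComplexConjugate

namespace AddChar

variable {R : Type*} [CommRing R] [Fintype R]

lemma norm_sum_apply_mul_pow_four (ψ : AddChar R ℂ) (A : Finset R) (ξ : R) :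
    ((‖∑ a ∈ A, ψ (a * ξ)‖ ^ 4 : ℝ) : ℂ) =
      ∑ x ∈ A ×ˢ A ×ˢ A ×ˢ A, ψ ((x.1 + x.2.1 - (x.2.2.1 + x.2.2.2)) * ξ) := by
  have hconj : conj (∑ a ∈ A, ψ (a * ξ)) = ∑ a ∈ A, ψ (-(a * ξ)) := by
    simp only [map_sum, map_neg_eq_conj]
  have h4 : ((‖∑ a ∈ A, ψ (a * ξ)‖ ^ 4 : ℝ) : ℂ) =
      (∑ a ∈ A, ψ (a * ξ)) * (∑ a ∈ A, ψ (a * ξ)) *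
        (conj (∑ a ∈ A, ψ (a * ξ)) * conj (∑ a ∈ A, ψ (a * ξ))) := by
    rw [show 4 = 2 * 2 from rfl, pow_mul, Complex.ofReal_pow, Complex.sq_norm, ← Complex.mul_conj]
    ring
  rw [h4, hconj]
  simp only [sum_mul_sum, sum_product, ← map_add_eq_mul]
  refine sum_congr rfl fun a _ => ?_
  rw [sum_comm]
  exact sum_congr rfl fun b _ => sum_congr rfl fun c _ => sum_congr rfl fun d _ =>
    congrArg ψ (by ring)

lemma sum_norm_sum_apply_mul_pow_four [DecidableEq R] {ψ : AddChar R ℂ} (hψ : ψ.IsPrimitive)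
    (A : Finset R) :
    ∑ ξ, ‖∑ a ∈ A, ψ (a * ξ)‖ ^ 4 =
      Fintype.card R * #{x ∈ A ×ˢ A ×ˢ A ×ˢ A | x.1 + x.2.1 = x.2.2.1 + x.2.2.2} := by
  apply Complex.ofReal_injective
  rw [Complex.ofReal_sum]
  simp_rw [norm_sum_apply_mul_pow_four]
  rw [sum_comm]
  simp_rw [mul_comm _ (_ : R), sum_mulShift _ hψ, sub_eq_zero]
  rw [← Nat.cast_sum, sum_ite, sum_const_zero, add_zero, sum_const, smul_eq_mul, mul_comm]
  norm_cast

lemma sum_norm_sum_apply_mul_pow_four_le [DecidableEq R] {ψ : AddChar R ℂ}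
    (hψ : ψ.IsPrimitive) (A T : Finset R) :
    ∑ ξ ∈ T, ‖∑ a ∈ A, ψ (a * ξ)‖ ^ 4 ≤
      Fintype.card R * #{x ∈ A ×ˢ A ×ˢ A ×ˢ A | x.1 + x.2.1 = x.2.2.1 + x.2.2.2} := by
  rw [← sum_norm_sum_apply_mul_pow_four hψ]
  exact sum_le_univ_sum_of_nonneg fun ξ => by positivity

lemma card_pow_four_le_card_mul_energy [DecidableEq R] {ψ : AddChar R ℂ}
    (hψ : ψ.IsPrimitive) (A : Finset R) :
    (#A : ℝ) ^ 4 ≤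
      Fintype.card R * #{x ∈ A ×ˢ A ×ˢ A ×ˢ A | x.1 + x.2.1 = x.2.2.1 + x.2.2.2} := by
  simpa using sum_norm_sum_apply_mul_pow_four_le hψ A {0}

lemma norm_sum_apply_mul_pow_four_add_card_pow_four_le [DecidableEq R] {ψ : AddChar R ℂ}
    (hψ : ψ.IsPrimitive) (A : Finset R) {η : R} (hη : η ≠ 0) :
    ‖∑ a ∈ A, ψ (a * η)‖ ^ 4 + #A ^ 4 ≤
      Fintype.card R * #{x ∈ A ×ˢ A ×ˢ A ×ˢ A | x.1 + x.2.1 = x.2.2.1 + x.2.2.2} := by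
  simpa [sum_pair hη] using sum_norm_sum_apply_mul_pow_four_le hψ A {η, 0}

end AddChar

lemma Real.iSup_pow_le_of_finite {ι : Type*} [Finite ι] {f : ι → ℝ} {n : ℕ} {a : ℝ}
    (hn : n ≠ 0) (hf : ∀ i, f i ^ n ≤ a) (ha : 0 ≤ a) : (⨆ i, f i) ^ n ≤ a := by
  rcases isEmpty_or_nonempty ι with hι | hι
  · simpa [zero_pow hn] using ha
  · obtain ⟨i, hi⟩ := exists_eq_ciSup_of_finite (f := f)
    exact hi ▸ hf i

lemma ZMod.exp_neg_eq_stdAddChar {N : ℕ} [NeZero N] (a ξ : ZMod N) :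
    Complex.exp (-(2 * Real.pi * Complex.I * ((a.val * ξ.val : ℕ) : ℂ) / N)) =
      ZMod.stdAddChar (a * -ξ) := by
  have h : a * -ξ = ((-(a.val * ξ.val : ℕ) : ℤ) : ZMod N) := by
    push_cast
    rw [ZMod.natCast_zmod_val, ZMod.natCast_zmod_val]
    ring
  rw [h, ZMod.stdAddChar_coe]
  push_cast
  ring_nf

theorem fourierBias_pow_four_le_general (N : ℕ) (hN : 0 < N) (A : Finset (ZMod N)) :
    fourierBias N A ^ 4 ≤ (addEnergy N A : ℝ) / (N : ℝ) ^ 3 - ((A.card : ℝ) / N) ^ 4 := by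
  have : NeZero N := ⟨hN.ne'⟩
  have hψ := ZMod.isPrimitive_stdAddChar N
  have hrhs : (addEnergy N A : ℝ) / (N : ℝ) ^ 3 - ((A.card : ℝ) / N) ^ 4 =
      (N * addEnergy N A - (#A : ℝ) ^ 4) / N ^ 4 := by
    field_simp
  rw [hrhs]
  refine Real.iSup_pow_le_of_finite four_ne_zero (fun ξ => ?_) ?_
  · have hkey := AddChar.norm_sum_apply_mul_pow_four_add_card_pow_four_le hψ A (neg_ne_zero.2 ξ.2)
    rw [ZMod.card] at hkey
    simp_rw [ZMod.exp_neg_eq_stdAddChar, norm_mul, norm_inv, Complex.norm_natCast, inv_mul_eq_div,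
      div_pow]
    gcongr
    exact le_sub_iff_add_le.2 hkey
  · have hcard := AddChar.card_pow_four_le_card_mul_energy hψ A
    rw [ZMod.card] at hcard
    exact div_nonneg (sub_nonneg.2 hcard) (by positivity)

/-- `‖A‖_U⁴ ≤ E(A,A)/N³ − (|A|/N)⁴`. -/
theorem fourierBias_pow_four_le (N : ℕ) (hN : 0 < N) (A : Finset (ZMod N))
    (hA : A.Nonempty) :
    fourierBias N A ^ 4 ≤ (addEnergy N A : ℝ) / (N : ℝ) ^ 3 - ((A.card : ℝ) / N) ^ 4 :=
  fourierBias_pow_four_le_general N hN A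
end

section
/- Let N be a positive integer and A a nonempty finite subset of ℤ_N. Define the Fourier bias ‖A‖_U = sup over nonzero ξ ∈ ℤ_N of |(1/N) · Σ_{a ∈ A} exp(-2πi·a·ξ/N)|, and the additive energy E(A,A) = #{(a,b,a',b') ∈ A×A×A×A : a + b = a' + b' in ℤ_N}. Then E(A,A)/N³ − (|A|/N)⁴ ≤ ‖A‖_U² · (|A|/N). -/
/-!
With `F ξ = ∑_{a ∈ A} e(aξ/N)`, orthogonality of characters gives `∑_ξ |F ξ|² = N |A|` and
`∑_ξ |F ξ|⁴ = N E(A,A)`, while `F 0 = |A|`. Hence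
`N E(A,A) - |A|⁴ = ∑_{ξ ≠ 0} |F ξ|⁴ ≤ (max_{ξ ≠ 0} |F ξ|)² ∑_ξ |F ξ|² = (N ‖A‖_U)² N |A|`.
-/

open Finset ComplexConjugate

section ExpSum

variable {R : Type*} [CommRing R] [Fintype R] (ψ : AddChar R ℂ)

def expSum (A : Finset R) (ξ : R) : ℂ := ∑ a ∈ A, ψ (a * ξ)

omit [Fintype R] in
@[simp] lemma expSum_zero (A : Finset R) : expSum ψ A 0 = #A := by
  simp [expSum]

lemma expSum_mul_conj (A : Finset R) (ξ : R) :
    expSum ψ A ξ * conj (expSum ψ A ξ) = ∑ x ∈ A ×ˢ A, ψ ((x.1 - x.2) * ξ) := by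
  simp only [expSum, map_sum, ← AddChar.map_neg_eq_conj, sum_mul_sum, sum_product,
    ← AddChar.map_add_eq_mul, sub_eq_add_neg, add_mul, neg_mul]

lemma expSum_sq_mul_conj_sq (A : Finset R) (ξ : R) :
    expSum ψ A ξ ^ 2 * conj (expSum ψ A ξ) ^ 2 =
      ∑ x ∈ A ×ˢ A ×ˢ A ×ˢ A, ψ ((x.1 + x.2.1 - (x.2.2.1 + x.2.2.2)) * ξ) := by
  simp only [expSum, sq, map_sum, ← AddChar.map_neg_eq_conj, sum_mul_sum, sum_product,
    ← AddChar.map_add_eq_mul]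
  refine sum_congr rfl fun _ _ ↦ sum_comm.trans <| sum_congr rfl fun _ _ ↦
    sum_congr rfl fun _ _ ↦ sum_congr rfl fun _ _ ↦ congrArg ψ (by ring)

variable [DecidableEq R] {ψ}

lemma sum_sum_mulShift_eq_card_mul_card_filter (hψ : ψ.IsPrimitive) {ι : Type*} (S : Finset ι)
    (L : ι → R) : ∑ ξ, ∑ x ∈ S, ψ (L x * ξ) = Fintype.card R * #{x ∈ S | L x = 0} := by
  rw [sum_comm]
  simp_rw [mul_comm (L _), AddChar.sum_mulShift _ hψ]
  norm_cast
  rw [sum_ite, sum_const_zero, add_zero, sum_const, smul_eq_mul, mul_comm]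

lemma sum_norm_expSum_sq (hψ : ψ.IsPrimitive) (A : Finset R) :
    ∑ ξ, ‖expSum ψ A ξ‖ ^ 2 = Fintype.card R * #A := by
  have h := sum_sum_mulShift_eq_card_mul_card_filter hψ (A ×ˢ A) fun x ↦ x.1 - x.2
  simp_rw [← expSum_mul_conj, Complex.mul_conj', sub_eq_zero, ← diag_eq_filter, diag_card] at h
  exact_mod_cast h

lemma sum_norm_expSum_pow_four (hψ : ψ.IsPrimitive) (A : Finset R) :
    ∑ ξ, ‖expSum ψ A ξ‖ ^ 4 =
      Fintype.card R * #{x ∈ A ×ˢ A ×ˢ A ×ˢ A | x.1 + x.2.1 = x.2.2.1 + x.2.2.2} := by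
  have h := sum_sum_mulShift_eq_card_mul_card_filter hψ (A ×ˢ A ×ˢ A ×ˢ A)
    fun x ↦ x.1 + x.2.1 - (x.2.2.1 + x.2.2.2)
  simp_rw [← expSum_sq_mul_conj_sq, ← mul_pow, Complex.mul_conj', ← pow_mul, sub_eq_zero] at h
  exact_mod_cast h

end ExpSum

lemma sum_pow_four_sub_le_sq_mul_sum_sq {ι : Type*} [Fintype ι] [DecidableEq ι] (f : ι → ℝ)
    (i₀ : ι) {M : ℝ} (hM : ∀ i ≠ i₀, |f i| ≤ M) :
    ∑ i, f i ^ 4 - f i₀ ^ 4 ≤ M ^ 2 * ∑ i, f i ^ 2 := by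
  rw [← sum_erase_eq_sub (mem_univ i₀), mul_sum]
  calc ∑ i ∈ univ.erase i₀, f i ^ 4
      ≤ ∑ i ∈ univ.erase i₀, M ^ 2 * f i ^ 2 := sum_le_sum fun i hi ↦ by
        have hfM : f i ^ 2 ≤ M ^ 2 :=
          sq_le_sq.mpr <| (hM i (ne_of_mem_erase hi)).trans (le_abs_self M)
        nlinarith [sq_nonneg (f i)]
    _ ≤ ∑ i, M ^ 2 * f i ^ 2 :=
        sum_le_sum_of_subset_of_nonneg (erase_subset _ _) fun _ _ _ ↦ by positivity

lemma exp_eq_stdAddChar {N : ℕ} [NeZero N] (a ξ : ZMod N) :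
    Complex.exp (-(2 * Real.pi * Complex.I * ((a.val * ξ.val : ℕ) : ℂ) / N)) =
      ZMod.stdAddChar (-(a * ξ)) := by
  have h : -(a * ξ) = ((-(a.val * ξ.val : ℕ) : ℤ) : ZMod N) := by simp
  rw [h, ZMod.stdAddChar_coe]
  push_cast
  ring_nf

/-- The term of `fourierBias N A` at `-ξ` is `‖expSum stdAddChar A ξ‖ / N`. -/
lemma norm_expSum_le_fourierBias {N : ℕ} [NeZero N] (A : Finset (ZMod N)) {ξ : ZMod N}
    (hξ : ξ ≠ 0) : ‖expSum ZMod.stdAddChar A ξ‖ ≤ N * fourierBias N A := by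
  have hN : (0 : ℝ) < N := by exact_mod_cast Nat.pos_of_neZero N
  rw [← div_le_iff₀' hN, fourierBias]
  refine le_of_eq_of_le ?_ <| le_ciSup (Set.finite_range _).bddAbove ⟨-ξ, neg_ne_zero.mpr hξ⟩
  simp_rw [exp_eq_stdAddChar, mul_neg, neg_neg, norm_mul, norm_inv, Complex.norm_natCast, expSum,
    div_eq_inv_mul]

theorem energy_le_fourierBias_sq_general (N : ℕ) (hN : 0 < N) (A : Finset (ZMod N)) :
    (addEnergy N A : ℝ) / (N : ℝ) ^ 3 - ((A.card : ℝ) / N) ^ 4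
      ≤ fourierBias N A ^ 2 * ((A.card : ℝ) / N) := by
  have : NeZero N := ⟨hN.ne'⟩
  have hψ := ZMod.isPrimitive_stdAddChar N
  have key := sum_pow_four_sub_le_sq_mul_sum_sq (fun ξ ↦ ‖expSum ZMod.stdAddChar A ξ‖) 0
    fun ξ hξ ↦ (abs_norm _).trans_le (norm_expSum_le_fourierBias A hξ)
  simp only [sum_norm_expSum_pow_four hψ, sum_norm_expSum_sq hψ, expSum_zero,
    Complex.norm_natCast, ZMod.card] at key
  have hN' : (0 : ℝ) < N := by exact_mod_cast hN
  calc _ = ((N : ℝ) * addEnergy N A - #A ^ 4) / N ^ 4 := by field_simp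
    _ ≤ (N * fourierBias N A) ^ 2 * (N * #A) / N ^ 4 := by gcongr; exact key
    _ = _ := by field_simp

/-- `E(A,A)/N³ − (|A|/N)⁴ ≤ ‖A‖_U² · (|A|/N)`. -/
theorem energy_le_fourierBias_sq (N : ℕ) (hN : 0 < N) (A : Finset (ZMod N))
    (hA : A.Nonempty) :
    (addEnergy N A : ℝ) / (N : ℝ) ^ 3 - ((A.card : ℝ) / N) ^ 4
      ≤ fourierBias N A ^ 2 * ((A.card : ℝ) / N) :=
  energy_le_fourierBias_sq_general N hN A
end

section
/- Let p be a prime, t₀ ∈ ℤ_p, and t : {1,…,m} → ℤ_p, and suppose the map (γ₁,…,γ_m) ∈ {0,1,2}^m ↦ 2t₀ + Σᵢ γᵢtᵢ ∈ ℤ_p is injective. Let n ∈ ℤ_p be of the form n = 2t₀ + Σᵢ γᵢtᵢ for some (necessarily unique) γ ∈ {0,1,2}^m. Then the number of ordered pairs (S₁, S₂) of subsets of {1,…,m} satisfying (t₀ + Σ_{i∈S₁} tᵢ) + (t₀ + Σ_{i∈S₂} tᵢ) = n in ℤ_p equals 2^{c₁(n)}, where c₁(n) = #{ i : γᵢ =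 1 }. -/
/-- If the GAP `B = {2t₀ + Σᵢ γᵢtᵢ : γᵢ ∈ {0,1,2}}` is proper and
`n = 2t₀ + Σᵢ γᵢtᵢ` for some `γ ∈ {0,1,2}^m`, then the number of ordered pairs
`(S₁,S₂)` of subsets of `{1,…,m}` with `(t₀ + Σ_{i∈S₁} tᵢ) + (t₀ + Σ_{i∈S₂} tᵢ) = n`
equals `2^{c₁(n)}` where `c₁(n) = #{i : γᵢ = 1}`. -/
theorem pair_count_of_representable (p m : ℕ) (hp : p.Prime)
    (t₀ : ZMod p) (t : Fin m → ZMod p)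
    (hB : Function.Injective (fun γ : Fin m → Fin 3 =>
      2 * t₀ + ∑ i, ((γ i : ℕ) : ZMod p) * t i))
    (γ : Fin m → Fin 3) (n : ZMod p)
    (hn : n = 2 * t₀ + ∑ i, ((γ i : ℕ) : ZMod p) * t i) :
    ((Finset.univ : Finset (Finset (Fin m) × Finset (Fin m))).filter
        (fun S => (t₀ + ∑ i ∈ S.1, t i) + (t₀ + ∑ i ∈ S.2, t i) = n)).card
      = 2 ^ (Finset.univ.filter (fun i : Fin m => γ i = 1)).card := by
  classical
  set A : Finset (Fin m) := Finset.univ.filter (fun i => γ i = 1) with hA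
  set C : Finset (Fin m) := Finset.univ.filter (fun i => γ i = 2) with hC
  set δ : Finset (Fin m) × Finset (Fin m) → Fin m → Fin 3 :=
    fun S i => (if i ∈ S.1 then 1 else 0) + (if i ∈ S.2 then 1 else 0) with hδ
  have e1 : ∀ (s : Finset (Fin m)), ∑ i ∈ s, t i
      = ∑ i : Fin m, (if i ∈ s then (1 : ZMod p) else 0) * t i := by
    intro s
    simp [ite_mul, Finset.sum_ite_mem]
  have cast_δ : ∀ (S : Finset (Fin m) × Finset (Fin m)) (i : Fin m),
      ((δ S i : ℕ) : ZMod p)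
        = (if i ∈ S.1 then (1 : ZMod p) else 0) + (if i ∈ S.2 then 1 else 0) := by
    intro S i
    simp only [hδ]
    by_cases h1 : i ∈ S.1 <;> by_cases h2 : i ∈ S.2 <;> simp [h1, h2] <;> norm_num
  have key : ∀ S : Finset (Fin m) × Finset (Fin m),
      (t₀ + ∑ i ∈ S.1, t i) + (t₀ + ∑ i ∈ S.2, t i)
        = 2 * t₀ + ∑ i, ((δ S i : ℕ) : ZMod p) * t i := by
    intro S
    have h2 : ∑ i : Fin m, ((δ S i : ℕ) : ZMod p) * t i
        = ∑ i : Fin m, ((if i ∈ S.1 then (1 : ZMod p) else 0) * t i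
            + (if i ∈ S.2 then (1 : ZMod p) else 0) * t i) := by
      refine Finset.sum_congr rfl fun i _ => ?_
      rw [cast_δ S i, add_mul]
    rw [h2, Finset.sum_add_distrib, ← e1 S.1, ← e1 S.2]
    ring
  have cond : ∀ S : Finset (Fin m) × Finset (Fin m),
      ((t₀ + ∑ i ∈ S.1, t i) + (t₀ + ∑ i ∈ S.2, t i) = n) ↔ δ S = γ := by
    intro S
    rw [key S, hn]
    constructor
    · intro h; exact hB h
    · intro h; rw [h]
  set g : Finset (Fin m) → Finset (Fin m) × Finset (Fin m) :=
    fun T => (C ∪ T, C ∪ (A \ T)) with hg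
  have hiA : ∀ i, i ∈ A ↔ γ i = 1 := by intro i; simp [hA]
  have hiC : ∀ i, i ∈ C ↔ γ i = 2 := by intro i; simp [hC]
  have himg : ((Finset.univ : Finset (Finset (Fin m) × Finset (Fin m))).filter
        (fun S => (t₀ + ∑ i ∈ S.1, t i) + (t₀ + ∑ i ∈ S.2, t i) = n))
      = A.powerset.image g := by
    ext S
    rw [Finset.mem_filter, Finset.mem_image]
    simp only [Finset.mem_univ, true_and, cond S]
    constructor
    · intro h
      have hδγ : ∀ i, δ S i = γ i := fun i => congrFun h i
      refine ⟨S.1 ∩ A, Finset.mem_powerset.2 Finset.inter_subset_right, ?_⟩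
      have hfst : C ∪ (S.1 ∩ A) = S.1 := by
        ext i
        have hi : γ i = (if i ∈ S.1 then (1 : Fin 3) else 0)
            + (if i ∈ S.2 then 1 else 0) := (hδγ i).symm
        simp only [Finset.mem_union, Finset.mem_inter, hiA, hiC]
        by_cases h1 : i ∈ S.1 <;> by_cases h2 : i ∈ S.2 <;>
          simp [h1, h2] at hi ⊢ <;> simp [hi] <;> decide
      have hsnd : C ∪ (A \ (S.1 ∩ A)) = S.2 := by
        ext i
        have hi : γ i = (if i ∈ S.1 then (1 : Fin 3) else 0)
            + (if i ∈ S.2 then 1 else 0) := (hδγ i).symm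
        simp only [Finset.mem_union, Finset.mem_sdiff, Finset.mem_inter, hiA, hiC]
        by_cases h1 : i ∈ S.1 <;> by_cases h2 : i ∈ S.2 <;>
          simp [h1, h2] at hi ⊢ <;> simp [hi] <;> decide
      show (C ∪ (S.1 ∩ A), C ∪ (A \ (S.1 ∩ A))) = S
      rw [hfst, hsnd]
    · rintro ⟨T, hT, rfl⟩
      rw [Finset.mem_powerset] at hT
      funext i
      have h3 : γ i = 0 ∨ γ i = 1 ∨ γ i = 2 := by
        have hlt := (γ i).isLt
        have : (γ i).val = 0 ∨ (γ i).val = 1 ∨ (γ i).val = 2 := by omega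
        rcases this with h | h | h
        · exact Or.inl (Fin.ext h)
        · exact Or.inr (Or.inl (Fin.ext h))
        · exact Or.inr (Or.inr (Fin.ext h))
      simp only [hδ, hg, Finset.mem_union, Finset.mem_sdiff]
      rcases h3 with h | h | h
      · have hc : i ∉ C := by simp [hiC, h]
        have ha : i ∉ A := by simp [hiA, h]
        have ht : i ∉ T := fun hx => ha (hT hx)
        simp [hc, ha, ht, h]
      · have hc : i ∉ C := by simp [hiC, h]
        have ha : i ∈ A := by simp [hiA, h]
        by_cases ht : i ∈ T <;> simp [hc, ha, ht, h]
      · have hc : i ∈ C := by simp [hiC, h]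
        simp [hc, h]
  have hinj : Set.InjOn g (A.powerset : Finset (Finset (Fin m))) := by
    intro T hT T' hT' h
    simp only [Finset.coe_powerset, Set.mem_preimage, Set.mem_powerset_iff,
      Finset.coe_subset] at hT hT'
    have h1 : C ∪ T = C ∪ T' := congrArg Prod.fst h
    ext i
    constructor
    · intro hi
      have hA1 : γ i = 1 := (hiA i).1 (hT hi)
      have : i ∈ C ∪ T' := h1 ▸ Finset.mem_union_right C hi
      rcases Finset.mem_union.1 this with hc | ht
      · exact absurd ((hiC i).1 hc) (by simp [hA1])
      · exact ht
    · intro hi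
      have hA1 : γ i = 1 := (hiA i).1 (hT' hi)
      have : i ∈ C ∪ T := h1 ▸ Finset.mem_union_right C hi
      rcases Finset.mem_union.1 this with hc | ht
      · exact absurd ((hiC i).1 hc) (by simp [hA1])
      · exact ht
  rw [himg, Finset.card_image_of_injOn hinj, Finset.card_powerset]
end
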